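/- arXiv:1706.05264 — 6 statements merged into one kernel-verified Lean document; each statement's English description precedes it below -/
import Mathlib

section
/- Let p and q be probability distributions on k elements with non-increasingly ordered entries such that p does not majorize q, and set δ* = 2 max_{l ∈ {1,…,k}} Σ_{i=1}^l (q_i − p_i). Then the steepest δ*-approximation of p majorizes q, i.e. p̄^(δ*) ≻ q, and for every δ with 0 ≤ δ < δ* the steepest δ-approximation of p does not majorize q; that is, δ* is the minimal δ such that p̄^(δ) ≻ q. -/
open Finset

noncomputable section

/-- The ℓ¹ distance `‖a − b‖ = Σᵢ |aᵢ − bᵢ|` between two vectors in `ℝ^k`. -/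
def l1dist {k : ℕ} (a b : Fin k → ℝ) : ℝ := ∑ i, |a i - b i|

/-- A probability distribution on `k` elements: nonnegative entries summing to 1. -/
def IsProbDist {k : ℕ} (p : Fin k → ℝ) : Prop := (∀ i, 0 ≤ p i) ∧ ∑ i, p i = 1

/-- The vector `a` rearranged in non-increasing order, `a↓`. -/
def descSort {k : ℕ} (a : Fin k → ℝ) : Fin k → ℝ := fun i => a (Tuple.sort a i.rev)

/-- The sum of the first `l` entries of `a` (1-based indexing: entries `1,…,l`). -/
def psum {k : ℕ} (a : Fin k → ℝ) (l : ℕ) : ℝ :=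
  ∑ i ∈ univ.filter (fun i : Fin k => (i : ℕ) < l), a i

/-- The sum of the entries of `a` from position `l` to `k` (1-based indexing). -/
def tailSum {k : ℕ} (a : Fin k → ℝ) (l : ℕ) : ℝ :=
  ∑ i ∈ univ.filter (fun i : Fin k => l ≤ (i : ℕ) + 1), a i

/-- `a` majorizes `b` (`a ≻ b`): the total sums agree and all partial sums of the
non-increasing rearrangements satisfy `Σ_{i=1}^l a↓ᵢ ≥ Σ_{i=1}^l b↓ᵢ` for `l = 1,…,k`. -/
def Majorizes {k : ℕ} (a b : Fin k → ℝ) : Prop :=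
  (∑ i, a i = ∑ i, b i) ∧
  ∀ l : ℕ, 1 ≤ l → l ≤ k → psum (descSort b) l ≤ psum (descSort a) l

/-- The distribution `e₁ = (1,0,…,0)`. -/
def e1 (k : ℕ) : Fin k → ℝ := fun i => if (i : ℕ) = 0 then 1 else 0

/-- The uniform distribution `η = (1/k,…,1/k)`. -/
def unif (k : ℕ) : Fin k → ℝ := fun _ => (k : ℝ)⁻¹

/-- The unnormalised vector `r` in the construction of the steepest approximation:
`r₁ = p₁ + δ/2`, `rᵢ = pᵢ` otherwise. -/
def steepR {k : ℕ} (δ : ℝ) (p : Fin k → ℝ) : Fin k → ℝ :=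
  fun i => if (i : ℕ) = 0 then p i + δ / 2 else p i

/-- `lstar ∈ {1,…,k}` is the truncation index of the steepest `δ`-approximation of `p`:
`Σ_{i=1}^{l*} rᵢ ≤ 1 < Σ_{i=1}^{l*+1} rᵢ` (the second sum being meaningful for `l* < k`). -/
def IsTruncIdx {k : ℕ} (δ : ℝ) (p : Fin k → ℝ) (lstar : ℕ) : Prop :=
  1 ≤ lstar ∧ lstar ≤ k ∧ psum (steepR δ p) lstar ≤ 1 ∧
    (lstar < k → 1 < psum (steepR δ p) (lstar + 1))

/-- `pbar` is the steepest `δ`-approximation `p̄^(δ)` of `p` (assumed non-increasingly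
ordered): if `‖p − e₁‖ ≤ δ` then `pbar = e₁`; otherwise `pbar` agrees with `r` on the
first `l*` entries, has `1 − Σ_{i=1}^{l*} rᵢ` at position `l*+1`, and `0` afterwards. -/
def IsSteepest {k : ℕ} (δ : ℝ) (p pbar : Fin k → ℝ) : Prop :=
  (l1dist p (e1 k) ≤ δ ∧ pbar = e1 k) ∨
  (δ < l1dist p (e1 k) ∧ ∃ lstar : ℕ, IsTruncIdx δ p lstar ∧
    ∀ i : Fin k, pbar i =
      if (i : ℕ) < lstar then steepR δ p i
      else if (i : ℕ) = lstar then 1 - psum (steepR δ p) lstar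
      else 0)

/-- `ε(x) = Σ_{i : pᵢ ≥ x} (pᵢ − x)`. -/
def epsFn {k : ℕ} (p : Fin k → ℝ) (x : ℝ) : ℝ :=
  ∑ i ∈ univ.filter (fun i : Fin k => x ≤ p i), (p i - x)

/-- `γ(y) = Σ_{i : pᵢ ≤ y} (y − pᵢ)`. -/
def gammaFn {k : ℕ} (p : Fin k → ℝ) (y : ℝ) : ℝ :=
  ∑ i ∈ univ.filter (fun i : Fin k => p i ≤ y), (y - p i)

/-- `pflat` is the flattest `δ`-approximation of `p` built from the cutting level `x*` and
the filling level `y*`: `x*, y* ∈ [0,1]`, `ε(x*) = γ(y*) = δ/2`, and `pflat` equals `x*`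
where `pᵢ ≥ x*`, equals `y*` where `pᵢ ≤ y*`, and equals `pᵢ` otherwise. -/
def IsFlattestWith {k : ℕ} (δ : ℝ) (p pflat : Fin k → ℝ) (x y : ℝ) : Prop :=
  x ∈ Set.Icc (0 : ℝ) 1 ∧ y ∈ Set.Icc (0 : ℝ) 1 ∧
  epsFn p x = δ / 2 ∧ gammaFn p y = δ / 2 ∧
  ∀ i : Fin k, pflat i = if x ≤ p i then x else if p i ≤ y then y else p i

/-- `pflat` is the flattest `δ`-approximation `p̲^(δ)` of `p` (assumed non-increasingly
ordered): if `‖p − η‖ ≤ δ` then `pflat = η`; otherwise it is obtained by cutting at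
level `x*` and filling at level `y*`. -/
def IsFlattest {k : ℕ} (δ : ℝ) (p pflat : Fin k → ℝ) : Prop :=
  (l1dist p (unif k) ≤ δ ∧ pflat = unif k) ∨
  (δ < l1dist p (unif k) ∧ ∃ x y : ℝ, IsFlattestWith δ p pflat x y)

end

/-! The steepest `δ`-approximation is non-increasing and its partial sums are
`Σ_{i ≤ l} p̄ᵢ = min (Σ_{i ≤ l} pᵢ + δ/2) 1`. Since `Σ_{i ≤ l} qᵢ ≤ 1` always, `p̄^(δ) ≻ q` holds
exactly when `2 Σ_{i ≤ l} (qᵢ − pᵢ) ≤ δ` for every `l`, that is, when `δ* ≤ δ`. -/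

section PartialSums

variable {k : ℕ}

theorem descSort_eq_self_of_antitone {a : Fin k → ℝ} (ha : Antitone a) : descSort a = a := by
  have h := Tuple.unique_monotone (Tuple.monotone_sort a) (τ := Fin.revPerm)
    fun i j hij => ha (Fin.rev_le_rev.mpr hij)
  funext i
  simpa [descSort] using congrFun h i.rev

theorem majorizes_iff_of_antitone {a b : Fin k → ℝ} (ha : Antitone a) (hb : Antitone b) :
    Majorizes a b ↔
      ∑ i, a i = ∑ i, b i ∧ ∀ l : ℕ, 1 ≤ l → l ≤ k → psum b l ≤ psum a l := by
  rw [Majorizes, descSort_eq_self_of_antitone ha, descSort_eq_self_of_antitone hb]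

theorem psum_zero (a : Fin k → ℝ) : psum a 0 = 0 := by
  simp [psum]

theorem psum_succ (a : Fin k → ℝ) {l : ℕ} (hl : l < k) :
    psum a (l + 1) = psum a l + a ⟨l, hl⟩ := by
  have : univ.filter (fun i : Fin k => (i : ℕ) < l + 1) =
      insert ⟨l, hl⟩ (univ.filter fun i : Fin k => (i : ℕ) < l) := by
    ext i
    simp only [mem_filter, mem_univ, true_and, mem_insert, Fin.ext_iff]
    omega
  rw [psum, this, sum_insert (by simp), add_comm, psum]

theorem psum_one (a : Fin k → ℝ) (hk : 0 < k) : psum a 1 = a ⟨0, hk⟩ := by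
  rw [psum_succ a hk, psum_zero, zero_add]

theorem psum_of_le (a : Fin k → ℝ) {l : ℕ} (hl : k ≤ l) : psum a l = ∑ i, a i := by
  rw [psum, filter_true_of_mem fun i _ => i.isLt.trans_le hl]

theorem psum_add (a b : Fin k → ℝ) (l : ℕ) : psum (a + b) l = psum a l + psum b l :=
  sum_add_distrib

theorem psum_mono {a : Fin k → ℝ} (ha : 0 ≤ a) : Monotone (psum a) := fun _ _ hlm =>
  sum_le_sum_of_subset_of_nonneg (monotone_filter_right _ fun _ _ hi => hi.trans_le hlm)
    fun i _ _ => ha i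

theorem psum_le_sum {a : Fin k → ℝ} (ha : 0 ≤ a) (l : ℕ) : psum a l ≤ ∑ i, a i :=
  sum_le_sum_of_subset_of_nonneg (filter_subset _ _) fun i _ _ => ha i

theorem psum_ite_zero (c : ℝ) {l : ℕ} (hl : 1 ≤ l) (hlk : l ≤ k) :
    psum (fun i : Fin k => if (i : ℕ) = 0 then c else 0) l = c := by
  rw [psum, sum_ite, sum_const_zero, add_zero, filter_filter]
  have : univ.filter (fun i : Fin k => (i : ℕ) < l ∧ (i : ℕ) = 0) = {⟨0, by omega⟩} := by
    ext i
    simp only [mem_filter, mem_univ, true_and, mem_singleton, Fin.ext_iff]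
    omega
  rw [this, sum_singleton]

theorem antitone_ite_zero {c : ℝ} (hc : 0 ≤ c) :
    Antitone fun i : Fin k => if (i : ℕ) = 0 then c else 0 := by
  intro i j hij
  have : (i : ℕ) ≤ j := hij
  dsimp only
  split_ifs <;> first | rfl | exact hc | omega

theorem IsProbDist.pos {p : Fin k → ℝ} (hp : IsProbDist p) : 0 < k :=
  Nat.pos_of_ne_zero fun hk => by subst hk; simpa using hp.2

end PartialSums

section Steepest

variable {k : ℕ} {δ : ℝ} {p : Fin k → ℝ}

theorem steepR_eq_add (δ : ℝ) (p : Fin k → ℝ) :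
    steepR δ p = p + fun i : Fin k => if (i : ℕ) = 0 then δ / 2 else 0 := by
  funext i
  simp only [steepR, Pi.add_apply]
  split_ifs <;> simp

theorem psum_steepR {l : ℕ} (hl : 1 ≤ l) (hlk : l ≤ k) :
    psum (steepR δ p) l = psum p l + δ / 2 := by
  rw [steepR_eq_add, psum_add, psum_ite_zero _ hl hlk]

theorem steepR_nonneg (hδ : 0 ≤ δ) (hp0 : 0 ≤ p) : 0 ≤ steepR δ p := by
  rw [steepR_eq_add]
  exact add_nonneg hp0 fun i => by dsimp; split_ifs <;> linarith

theorem steepR_antitone (hδ : 0 ≤ δ) (hp : Antitone p) : Antitone (steepR δ p) := by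
  rw [steepR_eq_add]
  exact hp.add (antitone_ite_zero (by linarith))

theorem psum_e1 {l : ℕ} (hl : 1 ≤ l) (hlk : l ≤ k) : psum (e1 k) l = 1 :=
  psum_ite_zero 1 hl hlk

theorem l1dist_e1 (hp : IsProbDist p) : l1dist p (e1 k) = 2 - 2 * p ⟨0, hp.pos⟩ := by
  obtain ⟨n, rfl⟩ := Nat.exists_eq_add_one_of_ne_zero hp.pos.ne'
  obtain ⟨hp0, hps⟩ := hp
  rw [Fin.sum_univ_succ] at hps
  have hp1 : p 0 ≤ 1 := by linarith [sum_nonneg fun i (_ : i ∈ univ) => hp0 (Fin.succ i)]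
  simp only [l1dist, e1, Fin.val_eq_zero_iff, Fin.sum_univ_succ, ↓reduceIte, Fin.succ_ne_zero,
    abs_of_nonpos (sub_nonpos.mpr hp1), neg_sub, sub_zero, abs_of_nonneg (hp0 _), Fin.zero_eta]
  linarith

noncomputable def steepTrunc (δ : ℝ) (p : Fin k → ℝ) (lstar : ℕ) : Fin k → ℝ := fun i =>
  if (i : ℕ) < lstar then steepR δ p i
  else if (i : ℕ) = lstar then 1 - psum (steepR δ p) lstar
  else 0

variable {lstar : ℕ}

theorem psum_steepTrunc_of_le {l : ℕ} (hl : l ≤ lstar) :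
    psum (steepTrunc δ p lstar) l = psum (steepR δ p) l :=
  sum_congr rfl fun _ hi => if_pos ((mem_filter.mp hi).2.trans_le hl)

theorem psum_steepTrunc_of_lt {l : ℕ} (hl : lstar < l) (hlk : l ≤ k) :
    psum (steepTrunc δ p lstar) l = 1 := by
  induction l, hl using Nat.le_induction with
  | base =>
    rw [psum_succ _ hlk, psum_steepTrunc_of_le le_rfl]
    simp [steepTrunc]
  | succ m hm ih =>
    rw [psum_succ _ hlk, ih (by omega)]
    simp [steepTrunc, show ¬ m < lstar by omega, show m ≠ lstar by omega]

theorem psum_steepTrunc (hp0 : 0 ≤ p) (ht : IsTruncIdx δ p lstar) {l : ℕ} (hl : 1 ≤ l)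
    (hlk : l ≤ k) : psum (steepTrunc δ p lstar) l = min (psum p l + δ / 2) 1 := by
  obtain ⟨hls, hlsk, hle, hgt⟩ := ht
  rcases le_or_gt l lstar with h | h
  · rw [psum_steepR hls hlsk] at hle
    rw [psum_steepTrunc_of_le h, psum_steepR hl hlk, min_eq_left]
    linarith [psum_mono hp0 h]
  · have hgt := hgt (by omega)
    rw [psum_steepR (by omega) (by omega)] at hgt
    rw [psum_steepTrunc_of_lt h hlk, min_eq_right]
    linarith [psum_mono hp0 h]

theorem steepTrunc_nonneg (hδ : 0 ≤ δ) (hp0 : 0 ≤ p) (ht : IsTruncIdx δ p lstar) :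
    0 ≤ steepTrunc δ p lstar := fun i => by
  dsimp only [steepTrunc]
  split_ifs
  exacts [steepR_nonneg hδ hp0 i, sub_nonneg.mpr ht.2.2.1, le_rfl]

theorem steepTrunc_le_steepR (hδ : 0 ≤ δ) (hp0 : 0 ≤ p) (ht : IsTruncIdx δ p lstar) :
    steepTrunc δ p lstar ≤ steepR δ p := fun i => by
  dsimp only [steepTrunc]
  split_ifs with _ h
  · exact le_rfl
  · have hgt := ht.2.2.2 (h ▸ i.isLt)
    rw [psum_succ _ (h ▸ i.isLt)] at hgt
    rw [show i = ⟨lstar, h ▸ i.isLt⟩ from Fin.ext h]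
    linarith
  · exact steepR_nonneg hδ hp0 i

theorem steepTrunc_antitone (hδ : 0 ≤ δ) (hp0 : 0 ≤ p) (hp : Antitone p)
    (ht : IsTruncIdx δ p lstar) : Antitone (steepTrunc δ p lstar) := by
  intro i j hij
  rcases lt_or_ge (i : ℕ) lstar with hi | hi
  · calc steepTrunc δ p lstar j ≤ steepR δ p j := steepTrunc_le_steepR hδ hp0 ht j
      _ ≤ steepR δ p i := steepR_antitone hδ hp hij
      _ = steepTrunc δ p lstar i := by simp [steepTrunc, hi]
  · rcases eq_or_ne i j with rfl | hne
    · exact le_rfl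
    · have hj : lstar < (j : ℕ) := by
        have : (i : ℕ) ≤ j := hij
        have : (i : ℕ) ≠ j := Fin.val_ne_of_ne hne
        omega
      calc steepTrunc δ p lstar j = 0 := by
            simp [steepTrunc, show ¬ (j : ℕ) < lstar by omega, hj.ne']
        _ ≤ steepTrunc δ p lstar i := steepTrunc_nonneg hδ hp0 ht i

variable {pbar : Fin k → ℝ}

theorem psum_of_isSteepest (hp : IsProbDist p) (h : IsSteepest δ p pbar) {l : ℕ} (hl : 1 ≤ l)
    (hlk : l ≤ k) : psum pbar l = min (psum p l + δ / 2) 1 := by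
  rcases h with ⟨hdist, rfl⟩ | ⟨-, lstar, ht, hpbar⟩
  · rw [l1dist_e1 hp] at hdist
    rw [psum_e1 hl hlk, min_eq_right]
    linarith [psum_one p hp.pos ▸ psum_mono hp.1 hl]
  · rw [show pbar = steepTrunc δ p lstar from funext hpbar, psum_steepTrunc hp.1 ht hl hlk]

theorem antitone_of_isSteepest (hδ : 0 ≤ δ) (hp0 : 0 ≤ p) (hp : Antitone p)
    (h : IsSteepest δ p pbar) : Antitone pbar := by
  rcases h with ⟨-, rfl⟩ | ⟨-, lstar, ht, hpbar⟩
  · exact antitone_ite_zero zero_le_one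
  · rw [show pbar = steepTrunc δ p lstar from funext hpbar]
    exact steepTrunc_antitone hδ hp0 hp ht

theorem majorizes_iff_of_isSteepest (hδ : 0 ≤ δ) (hp : IsProbDist p) (hpord : Antitone p)
    {q : Fin k → ℝ} (hq : IsProbDist q) (hqord : Antitone q) (h : IsSteepest δ p pbar) :
    Majorizes pbar q ↔ ∀ l : ℕ, 1 ≤ l → l ≤ k → 2 * (psum q l - psum p l) ≤ δ := by
  have hsum : ∑ i, pbar i = ∑ i, q i := by
    rw [← psum_of_le pbar le_rfl, psum_of_isSteepest hp h hp.pos le_rfl, psum_of_le p le_rfl,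
      hp.2, hq.2]
    exact min_eq_right (by linarith)
  rw [majorizes_iff_of_antitone (antitone_of_isSteepest hδ hp.1 hpord h) hqord]
  simp only [hsum, true_and]
  refine forall₃_congr fun l hl hlk => ?_
  rw [psum_of_isSteepest hp h hl hlk, le_min_iff,
    and_iff_left (hq.2 ▸ psum_le_sum hq.1 l)]
  constructor <;> intro <;> linarith

end Steepest

theorem min_delta_steepest_general {k : ℕ}
    (p q : Fin k → ℝ) (hp : IsProbDist p) (hq : IsProbDist q)
    (hpord : Antitone p) (hqord : Antitone q)
    (δstar : ℝ)
    (hub : ∀ l : ℕ, 1 ≤ l → l ≤ k → 2 * (psum q l - psum p l) ≤ δstar)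
    (hmem : ∃ l : ℕ, 1 ≤ l ∧ l ≤ k ∧ δstar = 2 * (psum q l - psum p l)) :
    (∀ pbar : Fin k → ℝ, IsSteepest δstar p pbar → Majorizes pbar q) ∧
    (∀ δ : ℝ, 0 ≤ δ → δ < δstar →
      ∀ pbar : Fin k → ℝ, IsSteepest δ p pbar → ¬ Majorizes pbar q) := by
  obtain ⟨l₀, hl₀, hl₀k, hδstar⟩ := hmem
  have hδstar_nonneg : 0 ≤ δstar := by
    simpa [psum_of_le _ le_rfl, hp.2, hq.2] using hub k (hl₀.trans hl₀k) le_rfl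
  refine ⟨fun pbar h =>
    (majorizes_iff_of_isSteepest hδstar_nonneg hp hpord hq hqord h).2 hub, ?_⟩
  intro δ hδ hδlt pbar h hmaj
  have := (majorizes_iff_of_isSteepest hδ hp hpord hq hqord h).1 hmaj l₀ hl₀ hl₀k
  linarith

/-- if `p ⊁ q` then `δ* = 2 max_{1 ≤ l ≤ k} Σ_{i=1}^l (qᵢ − pᵢ)` is the
minimal `δ` such that the steepest `δ`-approximation of `p` majorizes `q`. -/
theorem min_delta_steepest {k : ℕ}
    (p q : Fin k → ℝ) (hp : IsProbDist p) (hq : IsProbDist q)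
    (hpord : Antitone p) (hqord : Antitone q) (hnmaj : ¬ Majorizes p q)
    (δstar : ℝ)
    (hub : ∀ l : ℕ, 1 ≤ l → l ≤ k → 2 * (psum q l - psum p l) ≤ δstar)
    (hmem : ∃ l : ℕ, 1 ≤ l ∧ l ≤ k ∧ δstar = 2 * (psum q l - psum p l)) :
    (∀ pbar : Fin k → ℝ, IsSteepest δstar p pbar → Majorizes pbar q) ∧
    (∀ δ : ℝ, 0 ≤ δ → δ < δstar →
      ∀ pbar : Fin k → ℝ, IsSteepest δ p pbar → ¬ Majorizes pbar q) :=
  min_delta_steepest_general p q hp hq hpord hqord δstar hub hmem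
end

section
/- Let δ > 0 and let p and q be probability distributions on k elements with non-increasingly ordered entries such that p ≻ q, ‖p − η‖ > δ, and ‖q − η‖ > δ, where η is the uniform distribution. Let x = x*(p), x' = x*(q) be the cutting levels and y = y*(p), y' = y*(q) the filling levels arising in the construction of the flattest δ-approximations of p and q respectively. Then x ≥ x' and y ≤ y'. -/
open Finset

/-! The level function ε_p(x) = Σᵢ (pᵢ − x)₊ is Schur-convex: if q is sorted, the entries with
qᵢ ≥ x form an initial segment of some length l, so
ε_q(x) = Σ_{i<l} qᵢ − l x ≤ Σ_{i<l} pᵢ − l x ≤ ε_p(x) when p ≻ q.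
Since γ_p(y) = ε_p(y) − Σᵢ (pᵢ − y) and the totals of p and q agree, also γ_q ≤ γ_p.
Finally ε_p is strictly decreasing and γ_p strictly increasing where they are positive, so
ε_p(x) = δ/2 = ε_q(x') ≤ ε_p(x') forces x' ≤ x, and symmetrically y ≤ y'. -/

lemma epsFn_eq_sum_max {k : ℕ} (p : Fin k → ℝ) (x : ℝ) :
    epsFn p x = ∑ i, max (p i - x) 0 := by
  rw [epsFn, sum_filter]
  refine sum_congr rfl fun i _ => ?_
  split_ifs with h
  · exact (max_eq_left (sub_nonneg.mpr h)).symm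
  · exact (max_eq_right (by linarith)).symm

lemma gammaFn_eq_epsFn_neg {k : ℕ} (p : Fin k → ℝ) (y : ℝ) :
    gammaFn p y = epsFn (-p) (-y) := by
  simp only [gammaFn, epsFn, Pi.neg_apply, neg_le_neg_iff, neg_sub_neg]

lemma gammaFn_eq_epsFn_sub {k : ℕ} (p : Fin k → ℝ) (y : ℝ) :
    gammaFn p y = epsFn p y - ∑ i, (p i - y) := by
  simp only [gammaFn_eq_epsFn_neg, epsFn_eq_sum_max, ← sum_sub_distrib, Pi.neg_apply,
    neg_sub_neg]
  refine sum_congr rfl fun i _ => ?_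
  have := max_zero_sub_eq_self (p i - y)
  rw [neg_sub] at this
  linarith

lemma epsFn_comp_perm {k : ℕ} (p : Fin k → ℝ) (σ : Equiv.Perm (Fin k)) (x : ℝ) :
    epsFn (p ∘ σ) x = epsFn p x := by
  simp only [epsFn_eq_sum_max]
  exact Equiv.sum_comp σ fun i => max (p i - x) 0

lemma descSort_eq_comp {k : ℕ} (a : Fin k → ℝ) :
    descSort a = a ∘ (Fin.revPerm.trans (Tuple.sort a)) := by
  ext i
  simp [descSort]

lemma antitone_descSort {k : ℕ} (a : Fin k → ℝ) : Antitone (descSort a) :=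
  fun _ _ hij => Tuple.monotone_sort a (Fin.rev_le_rev.mpr hij)

lemma sum_sub_le_epsFn {k : ℕ} (a : Fin k → ℝ) (s : Finset (Fin k)) (x : ℝ) :
    ∑ i ∈ s, (a i - x) ≤ epsFn a x := by
  rw [epsFn_eq_sum_max]
  calc ∑ i ∈ s, (a i - x) ≤ ∑ i ∈ s, max (a i - x) 0 :=
        sum_le_sum fun i _ => le_max_left _ _
    _ ≤ ∑ i, max (a i - x) 0 :=
        sum_le_sum_of_subset_of_nonneg (subset_univ s) fun i _ _ => le_max_right _ _

lemma Antitone.exists_filter_le_eq_filter_lt {k : ℕ} {b : Fin k → ℝ} (hb : Antitone b)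
    (x : ℝ) : ∃ l ≤ k,
      univ.filter (fun i => x ≤ b i) = univ.filter (fun i : Fin k => (i : ℕ) < l) := by
  have hlow : IsLowerSet {i | x ≤ b i} := fun i j hji hi => hi.trans (hb hji)
  rcases hlow.eq_univ_or_Iio with huniv | ⟨a, ha⟩
  · refine ⟨k, le_rfl, filter_congr fun i _ => ?_⟩
    simpa only [i.isLt, iff_true, Set.mem_ofPred_eq] using Set.eq_univ_iff_forall.mp huniv i
  · refine ⟨a, a.isLt.le, filter_congr fun i _ => ?_⟩
    simpa only [Set.mem_ofPred_eq, Set.mem_Iio, Fin.lt_def] using Set.ext_iff.mp ha i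

lemma epsFn_le_of_psum_le {k : ℕ} {a b : Fin k → ℝ} (hb : Antitone b)
    (h : ∀ l ≤ k, psum b l ≤ psum a l) (x : ℝ) : epsFn b x ≤ epsFn a x := by
  obtain ⟨l, hlk, hl⟩ := hb.exists_filter_le_eq_filter_lt x
  calc epsFn b x = psum b l - ∑ i ∈ univ.filter (fun i : Fin k => (i : ℕ) < l), x := by
        rw [epsFn, hl, sum_sub_distrib, psum]
    _ ≤ psum a l - ∑ i ∈ univ.filter (fun i : Fin k => (i : ℕ) < l), x :=
        sub_le_sub_right (h l hlk) _
    _ ≤ epsFn a x := by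
        rw [psum, ← sum_sub_distrib]
        exact sum_sub_le_epsFn a _ x

lemma Majorizes.epsFn_le {k : ℕ} {p q : Fin k → ℝ} (h : Majorizes p q) (x : ℝ) :
    epsFn q x ≤ epsFn p x := by
  have hpsum : ∀ l ≤ k, psum (descSort q) l ≤ psum (descSort p) l := by
    intro l hlk
    rcases Nat.eq_zero_or_pos l with rfl | hl
    · simp [psum]
    · exact h.2 l hl hlk
  simpa only [descSort_eq_comp, epsFn_comp_perm] using
    epsFn_le_of_psum_le (antitone_descSort q) hpsum x

lemma Majorizes.gammaFn_le {k : ℕ} {p q : Fin k → ℝ} (h : Majorizes p q) (y : ℝ) :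
    gammaFn q y ≤ gammaFn p y := by
  simp only [gammaFn_eq_epsFn_sub, sum_sub_distrib, h.1]
  linarith [h.epsFn_le y]

lemma epsFn_lt_epsFn {k : ℕ} (p : Fin k → ℝ) {u v : ℝ} (huv : u < v)
    (hpos : 0 < epsFn p u) : epsFn p v < epsFn p u := by
  simp only [epsFn_eq_sum_max] at hpos ⊢
  obtain ⟨i, -, hi⟩ := exists_lt_of_sum_lt (s := univ) (f := fun _ => (0 : ℝ))
    (g := fun i => max (p i - u) 0) (by simpa using hpos)
  have hui : u < p i := by simpa [lt_max_iff] using hi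
  refine sum_lt_sum (fun j _ => by gcongr) ⟨i, mem_univ i, ?_⟩
  rw [max_eq_left (sub_nonneg.mpr hui.le)]
  exact max_lt (by linarith) (sub_pos.mpr hui)

lemma gammaFn_lt_gammaFn {k : ℕ} (p : Fin k → ℝ) {u v : ℝ} (huv : u < v)
    (hpos : 0 < gammaFn p v) : gammaFn p u < gammaFn p v := by
  rw [gammaFn_eq_epsFn_neg] at hpos ⊢
  rw [gammaFn_eq_epsFn_neg]
  exact epsFn_lt_epsFn (-p) (neg_lt_neg huv) hpos

theorem levels_monotone_under_majorization_general {k : ℕ} (δ : ℝ) (hδ : 0 < δ)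
    (p q : Fin k → ℝ)
    (hmaj : Majorizes p q)
    (x y x' y' : ℝ)
    (hex : epsFn p x = δ / 2) (hgy : gammaFn p y = δ / 2)
    (hex' : epsFn q x' = δ / 2) (hgy' : gammaFn q y' = δ / 2) :
    x' ≤ x ∧ y ≤ y' := by
  constructor
  · by_contra! hlt
    have hdrop := epsFn_lt_epsFn p hlt (by linarith)
    linarith [hmaj.epsFn_le x']
  · by_contra! hlt
    have hdrop := gammaFn_lt_gammaFn p hlt (by linarith)
    linarith [hmaj.gammaFn_le y']

/-- if `p ≻ q` then the cutting levels satisfy `x*(p) ≥ x*(q)` and the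
filling levels satisfy `y*(p) ≤ y*(q)`. -/
theorem levels_monotone_under_majorization {k : ℕ} (δ : ℝ) (hδ : 0 < δ)
    (p q : Fin k → ℝ) (hp : IsProbDist p) (hq : IsProbDist q)
    (hpord : Antitone p) (hqord : Antitone q)
    (hpd : δ < l1dist p (unif k)) (hqd : δ < l1dist q (unif k))
    (hmaj : Majorizes p q)
    (x y x' y' : ℝ)
    (hx : x ∈ Set.Icc (0 : ℝ) 1) (hy : y ∈ Set.Icc (0 : ℝ) 1)
    (hx' : x' ∈ Set.Icc (0 : ℝ) 1) (hy' : y' ∈ Set.Icc (0 : ℝ) 1)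
    (hex : epsFn p x = δ / 2) (hgy : gammaFn p y = δ / 2)
    (hex' : epsFn q x' = δ / 2) (hgy' : gammaFn q y' = δ / 2) :
    x' ≤ x ∧ y ≤ y' :=
  levels_monotone_under_majorization_general δ hδ p q hmaj x y x' y' hex hgy hex' hgy'
end

section
/- Let δ > 0 and let p be a probability distribution on k elements with non-increasingly ordered entries such that ‖p − η‖ > δ, where η is the uniform distribution, and let x* be the cutting level defined by ε(x*) = δ/2. Then for every l ∈ {1,…,k}, Σ_{i=1}^l p_i ≤ l·x* + δ/2. -/
open Finset

/- Each entry is at most `x + (pᵢ - x)⁺`, and the positive parts over all entries sum to `ε(x)`;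
so any `m` entries sum to at most `m·x + ε(x)`. -/

theorem epsFn_eq_sum_posPart {k : ℕ} (p : Fin k → ℝ) (x : ℝ) :
    epsFn p x = ∑ i, (p i - x)⁺ := by
  rw [epsFn, sum_filter]
  refine sum_congr rfl fun i _ => ?_
  split_ifs with h
  · exact (posPart_of_nonneg (sub_nonneg.2 h)).symm
  · exact (posPart_of_nonpos (sub_nonpos.2 (not_le.1 h).le)).symm

theorem sum_le_card_mul_add_epsFn {k : ℕ} (p : Fin k → ℝ) (x : ℝ) (s : Finset (Fin k)) :
    ∑ i ∈ s, p i ≤ #s * x + epsFn p x :=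
  calc ∑ i ∈ s, p i ≤ ∑ i ∈ s, (x + (p i - x)⁺) :=
        sum_le_sum fun i _ => by linarith [le_posPart (p i - x)]
    _ = #s * x + ∑ i ∈ s, (p i - x)⁺ := by
        rw [sum_add_distrib, sum_const, nsmul_eq_mul]
    _ ≤ #s * x + epsFn p x := by
        rw [epsFn_eq_sum_posPart]
        gcongr _ + ?_
        exact sum_le_sum_of_subset_of_nonneg (subset_univ s) fun i _ _ => posPart_nonneg _

theorem psum_le_min_mul_add_epsFn {k : ℕ} (p : Fin k → ℝ) (x : ℝ) (l : ℕ) :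
    psum p l ≤ (min k l : ℕ) * x + epsFn p x := by
  rw [← Fin.card_filter_val_lt]
  exact sum_le_card_mul_add_epsFn p x _

theorem psum_le_cutting_level_general {k : ℕ} (δ : ℝ)
    (p : Fin k → ℝ)
    (x : ℝ) (hex : epsFn p x = δ / 2) :
    ∀ l : ℕ, 1 ≤ l → l ≤ k → psum p l ≤ (l : ℝ) * x + δ / 2 := by
  intro l _ hlk
  simpa [min_eq_right hlk, hex] using psum_le_min_mul_add_epsFn p x l

/-- with `x*` the cutting level of `p`, every partial sum satisfies
`Σ_{i=1}^l pᵢ ≤ l·x* + δ/2`. -/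
theorem psum_le_cutting_level {k : ℕ} (δ : ℝ) (hδ : 0 < δ)
    (p : Fin k → ℝ) (hp : IsProbDist p) (hord : Antitone p)
    (hpd : δ < l1dist p (unif k))
    (x : ℝ) (hx : x ∈ Set.Icc (0 : ℝ) 1) (hex : epsFn p x = δ / 2) :
    ∀ l : ℕ, 1 ≤ l → l ≤ k → psum p l ≤ (l : ℝ) * x + δ / 2 :=
  psum_le_cutting_level_general δ p x hex
end

section
/- Let δ > 0 and let p be a probability distribution on k elements with non-increasingly ordered entries such that ‖p − η‖ > δ, where η is the uniform distribution, and let y* be the filling level defined by γ(y*) = δ/2. Then for every l ∈ {1,…,k}, Σ_{i=l}^k p_i ≥ (k − l + 1)·y* − δ/2. -/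
open Finset

/-! On the tail `S = {l,…,k}`, `(k − l + 1)·y* − Σ_{i ∈ S} pᵢ = Σ_{i ∈ S} (y* − pᵢ)` is at most the
sum of the positive parts `(y* − pᵢ)⁺` over all `i`, and that sum is `γ(y*) = δ/2`. -/

lemma gammaFn_eq_sum_max {k : ℕ} (p : Fin k → ℝ) (y : ℝ) :
    gammaFn p y = ∑ i, max (y - p i) 0 := by
  rw [gammaFn, sum_filter]
  refine sum_congr rfl fun i _ => ?_
  split_ifs with h
  · exact (max_eq_left (sub_nonneg.mpr h)).symm
  · exact (max_eq_right (by linarith [not_le.mp h])).symm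

lemma sum_sub_le_gammaFn {k : ℕ} (p : Fin k → ℝ) (y : ℝ) (s : Finset (Fin k)) :
    ∑ i ∈ s, (y - p i) ≤ gammaFn p y :=
  calc ∑ i ∈ s, (y - p i) ≤ ∑ i ∈ s, max (y - p i) 0 := sum_le_sum fun _ _ => le_max_left _ _
    _ ≤ ∑ i, max (y - p i) 0 :=
      sum_le_sum_of_subset_of_nonneg (subset_univ s) fun _ _ _ => le_max_right _ _
    _ = gammaFn p y := (gammaFn_eq_sum_max p y).symm

lemma card_filter_le_val_add_one {k l : ℕ} (hl : 1 ≤ l) (hlk : l ≤ k) :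
    (#(univ.filter fun i : Fin k => l ≤ (i : ℕ) + 1) : ℝ) = k - l + 1 := by
  have hS : univ.filter (fun i : Fin k => l ≤ (i : ℕ) + 1) = Ici ⟨l - 1, by omega⟩ := by
    ext i
    simp only [mem_filter, mem_univ, true_and, mem_Ici, Fin.le_def]
    omega
  rw [hS, Fin.card_Ici, Nat.cast_sub (by omega), Nat.cast_sub hl]
  push_cast
  ring

lemma sub_tailSum_le_gammaFn {k : ℕ} (p : Fin k → ℝ) (y : ℝ) {l : ℕ} (hl : 1 ≤ l) (hlk : l ≤ k) :
    ((k : ℝ) - l + 1) * y - tailSum p l ≤ gammaFn p y := by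
  have h := sum_sub_le_gammaFn p y (univ.filter fun i : Fin k => l ≤ (i : ℕ) + 1)
  rwa [sum_sub_distrib, sum_const, nsmul_eq_mul, card_filter_le_val_add_one hl hlk] at h

theorem tailSum_ge_filling_level_general {k : ℕ} (δ : ℝ)
    (p : Fin k → ℝ)
    (y : ℝ) (hgy : gammaFn p y = δ / 2) :
    ∀ l : ℕ, 1 ≤ l → l ≤ k → ((k : ℝ) - (l : ℝ) + 1) * y - δ / 2 ≤ tailSum p l := by
  intro l hl hlk
  linarith [sub_tailSum_le_gammaFn p y hl hlk]

/-- with `y*` the filling level of `p`, every tail sum satisfies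
`Σ_{i=l}^k pᵢ ≥ (k − l + 1)·y* − δ/2`. -/
theorem tailSum_ge_filling_level {k : ℕ} (δ : ℝ) (hδ : 0 < δ)
    (p : Fin k → ℝ) (hp : IsProbDist p) (hord : Antitone p)
    (hpd : δ < l1dist p (unif k))
    (y : ℝ) (hy : y ∈ Set.Icc (0 : ℝ) 1) (hgy : gammaFn p y = δ / 2) :
    ∀ l : ℕ, 1 ≤ l → l ≤ k → ((k : ℝ) - (l : ℝ) + 1) * y - δ / 2 ≤ tailSum p l :=
  tailSum_ge_filling_level_general δ p y hgy
end

section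
/- Let δ > 0 and let p be a probability distribution on k elements with non-increasingly ordered entries such that ‖p − η‖ > δ, where η is the uniform distribution. Then there exists a unique x* ∈ [0,1] with ε(x*) = δ/2 and a unique y* ∈ [0,1] with γ(y*) = δ/2, and moreover x* > y*. -/
open Finset

/-!
The cutting function `ε` is continuous, non-increasing, and strictly decreasing wherever it is
positive; the filling function `γ(y) = ε_{-p}(-y)` is its mirror image. Since
`ε(t) - γ(t) = Σ pᵢ - k t` and `ε(t) + γ(t) = ‖p - (t,…,t)‖`, at `t = 1/k` both equal
`‖p - η‖ / 2 > δ / 2`. The intermediate value theorem then gives `x* ∈ (1/k, 1]` and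
`y* ∈ [0, 1/k)`, and strict monotonicity at the positive level `δ / 2` gives uniqueness.
-/

namespace CuttingFilling

variable {k : ℕ} (p : Fin k → ℝ)

theorem epsFn_eq_sum_posPart (x : ℝ) : epsFn p x = ∑ i, (p i - x)⁺ := by
  rw [epsFn, sum_filter]
  refine sum_congr rfl fun i _ => ?_
  split_ifs with h
  · exact (posPart_eq_self.2 (sub_nonneg.2 h)).symm
  · exact (posPart_eq_zero.2 (sub_nonpos.2 (not_le.1 h).le)).symm

theorem gammaFn_eq_epsFn_comp_neg : gammaFn p = epsFn (-p) ∘ Neg.neg := by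
  ext y
  simp only [gammaFn, epsFn, Function.comp_apply, Pi.neg_apply, neg_le_neg_iff, neg_sub_neg]

theorem gammaFn_eq_sum_negPart (y : ℝ) : gammaFn p y = ∑ i, (p i - y)⁻ := by
  simp only [gammaFn_eq_epsFn_comp_neg, Function.comp_apply, epsFn_eq_sum_posPart,
    Pi.neg_apply, neg_sub_neg, ← neg_sub (p _) y]
  rfl

theorem continuous_epsFn : Continuous (epsFn p) := by
  simp only [funext (epsFn_eq_sum_posPart p)]
  fun_prop

theorem continuous_gammaFn : Continuous (gammaFn p) := by
  rw [gammaFn_eq_epsFn_comp_neg]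
  exact (continuous_epsFn (-p)).comp continuous_neg

theorem antitone_epsFn : Antitone (epsFn p) := fun a b hab => by
  simp only [epsFn_eq_sum_posPart]
  exact sum_le_sum fun i _ => posPart_mono (by linarith)

theorem monotone_gammaFn : Monotone (gammaFn p) := by
  rw [gammaFn_eq_epsFn_comp_neg]
  exact (antitone_epsFn (-p)).comp fun _ _ => neg_le_neg

theorem epsFn_lt_of_lt {a b : ℝ} (hab : a < b) (hb : 0 < epsFn p b) :
    epsFn p b < epsFn p a := by
  simp only [epsFn_eq_sum_posPart] at hb ⊢
  obtain ⟨i, -, hi⟩ := exists_lt_of_sum_lt (f := fun _ => (0 : ℝ)) (by simpa using hb)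
  have hbi : b < p i := sub_pos.1 (posPart_pos_iff.1 hi)
  refine sum_lt_sum (fun j _ => ?_) ⟨i, mem_univ i, ?_⟩
  · exact posPart_mono (by linarith)
  · rw [posPart_eq_self.2 (by linarith), posPart_eq_self.2 (by linarith)]
    linarith

theorem epsFn_injOn_pos : Set.InjOn (epsFn p) {x | 0 < epsFn p x} := by
  intro a ha b hb hab
  by_contra hne
  rcases lt_or_gt_of_ne hne with h | h
  · exact (epsFn_lt_of_lt p h hb).ne' hab
  · exact (epsFn_lt_of_lt p h ha).ne hab

theorem gammaFn_injOn_pos : Set.InjOn (gammaFn p) {y | 0 < gammaFn p y} := by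
  rw [gammaFn_eq_epsFn_comp_neg]
  exact (epsFn_injOn_pos (-p)).comp neg_injective.injOn fun _ hy => hy

theorem epsFn_eq_zero_of_le {x : ℝ} (h : ∀ i, p i ≤ x) : epsFn p x = 0 := by
  simp only [epsFn_eq_sum_posPart, posPart_eq_zero.2 (sub_nonpos.2 (h _)), sum_const_zero]

theorem gammaFn_eq_zero_of_le {y : ℝ} (h : ∀ i, y ≤ p i) : gammaFn p y = 0 := by
  rw [gammaFn_eq_epsFn_comp_neg, Function.comp_apply]
  exact epsFn_eq_zero_of_le (-p) fun i => neg_le_neg (h i)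

theorem epsFn_sub_gammaFn (t : ℝ) : epsFn p t - gammaFn p t = ∑ i, p i - k * t := by
  rw [epsFn_eq_sum_posPart, gammaFn_eq_sum_negPart, ← sum_sub_distrib]
  simp only [posPart_sub_negPart, sum_sub_distrib, sum_const, card_univ, Fintype.card_fin,
    nsmul_eq_mul]

theorem l1dist_const_eq_epsFn_add_gammaFn (t : ℝ) :
    l1dist p (fun _ => t) = epsFn p t + gammaFn p t := by
  simp only [l1dist, epsFn_eq_sum_posPart, gammaFn_eq_sum_negPart, ← sum_add_distrib,
    posPart_add_negPart]

theorem epsFn_inv_card_eq_gammaFn_inv_card (hp : ∑ i, p i = 1) :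
    epsFn p (k : ℝ)⁻¹ = gammaFn p (k : ℝ)⁻¹ := by
  have hk : (k : ℝ) ≠ 0 := Nat.cast_ne_zero.2 (by rintro rfl; simp at hp)
  have h := epsFn_sub_gammaFn p (k : ℝ)⁻¹
  rwa [hp, mul_inv_cancel₀ hk, sub_self, sub_eq_zero] at h

end CuttingFilling

open CuttingFilling in
theorem cutting_filling_levels_exist_unique_general {k : ℕ} (δ : ℝ) (hδ : 0 < δ)
    (p : Fin k → ℝ) (hp : IsProbDist p) (hpd : δ < l1dist p (unif k)) :
    ∃ x y : ℝ, x ∈ Set.Icc (0 : ℝ) 1 ∧ y ∈ Set.Icc (0 : ℝ) 1 ∧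
      epsFn p x = δ / 2 ∧ gammaFn p y = δ / 2 ∧
      (∀ x' ∈ Set.Icc (0 : ℝ) 1, epsFn p x' = δ / 2 → x' = x) ∧
      (∀ y' ∈ Set.Icc (0 : ℝ) 1, gammaFn p y' = δ / 2 → y' = y) ∧
      y < x := by
  have hp1 (i : Fin k) : p i ≤ 1 := hp.2 ▸ single_le_sum (fun j _ => hp.1 j) (mem_univ i)
  have hl1 : l1dist p (unif k) = epsFn p (k : ℝ)⁻¹ + gammaFn p (k : ℝ)⁻¹ :=
    l1dist_const_eq_epsFn_add_gammaFn p _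
  have hbalance := epsFn_inv_card_eq_gammaFn_inv_card p hp.2
  have hε : δ / 2 < epsFn p (k : ℝ)⁻¹ := by linarith
  have hγ : δ / 2 < gammaFn p (k : ℝ)⁻¹ := by linarith
  have hk0 : (0 : ℝ) ≤ (k : ℝ)⁻¹ := by positivity
  have hk1 : (k : ℝ)⁻¹ ≤ 1 := by
    by_contra! h
    exact hε.not_ge (by rw [epsFn_eq_zero_of_le p fun i => (hp1 i).trans h.le]; positivity)
  obtain ⟨x, ⟨-, hx1⟩, hx⟩ := intermediate_value_Icc' hk1 (continuous_epsFn p).continuousOn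
    ⟨by rw [epsFn_eq_zero_of_le p hp1]; positivity, hε.le⟩
  obtain ⟨y, ⟨hy0, -⟩, hy⟩ := intermediate_value_Icc hk0 (continuous_gammaFn p).continuousOn
    ⟨by rw [gammaFn_eq_zero_of_le p hp.1]; positivity, hγ.le⟩
  have hkx : (k : ℝ)⁻¹ < x := (antitone_epsFn p).reflect_lt (hx ▸ hε)
  have hyk : y < (k : ℝ)⁻¹ := (monotone_gammaFn p).reflect_lt (hy ▸ hγ)
  have hδ2 : 0 < δ / 2 := half_pos hδ
  refine ⟨x, y, ⟨by linarith, hx1⟩, ⟨hy0, by linarith⟩, hx, hy, ?_, ?_, hyk.trans hkx⟩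
  · intro x' _ hx'
    exact epsFn_injOn_pos p (by simp [hx', hδ2]) (by simp [hx, hδ2]) (hx'.trans hx.symm)
  · intro y' _ hy'
    exact gammaFn_injOn_pos p (by simp [hy', hδ2]) (by simp [hy, hδ2]) (hy'.trans hy.symm)

/-- if `‖p − η‖ > δ` then the cutting level `x*` and the filling level `y*`
exist, are unique in `[0,1]`, and satisfy `x* > y*`. -/
theorem cutting_filling_levels_exist_unique {k : ℕ} (δ : ℝ) (hδ : 0 < δ)
    (p : Fin k → ℝ) (hp : IsProbDist p) (hord : Antitone p)
    (hpd : δ < l1dist p (unif k)) :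
    ∃ x y : ℝ, x ∈ Set.Icc (0 : ℝ) 1 ∧ y ∈ Set.Icc (0 : ℝ) 1 ∧
      epsFn p x = δ / 2 ∧ gammaFn p y = δ / 2 ∧
      (∀ x' ∈ Set.Icc (0 : ℝ) 1, epsFn p x' = δ / 2 → x' = x) ∧
      (∀ y' ∈ Set.Icc (0 : ℝ) 1, gammaFn p y' = δ / 2 → y' = y) ∧
      y < x :=
  cutting_filling_levels_exist_unique_general δ hδ p hp hpd
end

section
/- Let δ > 0 and let p be a probability distribution on k elements with non-increasingly ordered entries such that ‖p − η‖ > δ, where η is the uniform distribution. Let x*, y* be the cutting and filling levels of the flattest δ-approximation p̲^(δ), let I = {i : p_i ≥ x*} = {1,…,l_I} and J = {i : p_i ≤ y*} = {l_J,…,k}. Then the Lorenz curve of p̲^(δ) satisfies: Σ_{i=1}^l p̲^(δ)_i = l·x* for l ∈ I, Σ_{i=1}^l p̲^(δ)_i = Σ_{i=1}^l p_i − δ/2 for l ∉ I ∪ J, and Σ_{i=1}^l p̲^(δ)_i = 1 − (k − l)·y* for l ∈ J. -/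
open Finset

/-!
For every level `c`, `ε(c) + γ(c) = ‖p − c‖` and `ε(c) − γ(c) = Σᵢ (pᵢ − c)`, so at the mean
`c = 1/k` both equal `‖p − η‖/2 > δ/2`. As `ε` decreases and `γ` increases, `y* < 1/k < x*`:
no entry is both cut and filled, the flattened vector still has total mass `1 − ε(x*) + γ(y*) = 1`,
`l_I ≤ k` because not every entry can reach `x* > 1/k`, and `l_J ≤ k` because `γ(y*) > 0`. The three formulas then just read off the partial sums: on `I` every entry
is `x*`; up to a position between `I` and `J` the flattened vector has lost exactly the mass
`ε(x*) = δ/2` cut from `I`; and past `l_J` every remaining entry is `y*`.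
-/

section PartialSums

variable {k : ℕ}

theorem psum_sub (f g : Fin k → ℝ) (l : ℕ) : psum (f - g) l = psum f l - psum g l :=
  sum_sub_distrib ..

theorem psum_const {l : ℕ} (hl : l ≤ k) (c : ℝ) : psum (fun _ : Fin k => c) l = l * c := by
  simp [psum, Fin.card_filter_val_lt, min_eq_right hl]

theorem psum_eq_mul_of_forall_lt {f : Fin k → ℝ} {l : ℕ} {c : ℝ} (hl : l ≤ k)
    (hf : ∀ i : Fin k, (i : ℕ) < l → f i = c) : psum f l = l * c := by
  rw [← psum_const hl c]
  exact sum_congr rfl fun i hi => hf i (mem_filter.1 hi).2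

theorem psum_eq_sum_sub_mul_of_forall_ge {f : Fin k → ℝ} {l : ℕ} {c : ℝ} (hl : l ≤ k)
    (hf : ∀ i : Fin k, l ≤ (i : ℕ) → f i = c) : psum f l = ∑ i, f i - (k - l) * c := by
  have htail : psum (f - fun _ => c) l = ∑ i, (f i - c) :=
    sum_filter_of_ne fun i _ hi => by_contra fun h => hi (sub_eq_zero.2 (hf i (not_lt.1 h)))
  rw [psum_sub, psum_const hl, sum_sub_distrib] at htail
  simp only [sum_const, card_univ, Fintype.card_fin, nsmul_eq_mul] at htail
  linarith

theorem psum_eq_psum_of_forall_Ico {g : Fin k → ℝ} {m l : ℕ} (hml : m ≤ l)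
    (hg : ∀ i : Fin k, m ≤ (i : ℕ) → (i : ℕ) < l → g i = 0) : psum g l = psum g m := by
  unfold psum
  rw [← sum_filter_of_ne (p := fun i : Fin k => (i : ℕ) < m), filter_filter]
  · exact sum_congr (filter_congr fun i _ => by omega) fun _ _ => rfl
  · exact fun i hi h => by_contra fun him => h (hg i (not_lt.1 him) (mem_filter.1 hi).2)

end PartialSums

section Levels

variable {k : ℕ} (p : Fin k → ℝ)

theorem epsFn_antitone : Antitone (epsFn p) := by
  intro u v huv
  simp only [epsFn, sum_filter]
  exact sum_le_sum fun i _ => by split_ifs <;> linarith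

theorem gammaFn_monotone : Monotone (gammaFn p) := by
  intro u v huv
  simp only [gammaFn, sum_filter]
  exact sum_le_sum fun i _ => by split_ifs <;> linarith

theorem l1dist_const (c : ℝ) : l1dist p (fun _ => c) = epsFn p c + gammaFn p c := by
  simp only [l1dist, epsFn, gammaFn, sum_filter, ← sum_add_distrib]
  refine sum_congr rfl fun i _ => ?_
  rcases le_total c (p i) with h | h
  · rw [abs_of_nonneg (sub_nonneg.2 h)]; split_ifs <;> linarith
  · rw [abs_of_nonpos (sub_nonpos.2 h)]; split_ifs <;> linarith

theorem epsFn_sub_gammaFn (c : ℝ) : epsFn p c - gammaFn p c = ∑ i, (p i - c) := by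
  simp only [epsFn, gammaFn, sum_filter, ← sum_sub_distrib]
  exact sum_congr rfl fun i _ => by split_ifs <;> linarith

variable {p}

theorem epsFn_inv_eq_gammaFn_inv (hp : ∑ i, p i = 1) :
    epsFn p (k : ℝ)⁻¹ = gammaFn p (k : ℝ)⁻¹ := by
  have hk : (k : ℝ) ≠ 0 := Nat.cast_ne_zero.2 (by rintro rfl; simp at hp)
  rw [← sub_eq_zero, epsFn_sub_gammaFn, sum_sub_distrib, hp]
  simp [hk]

theorem inv_lt_of_two_mul_epsFn_lt (hp : ∑ i, p i = 1) {x : ℝ}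
    (h : 2 * epsFn p x < l1dist p (unif k)) : (k : ℝ)⁻¹ < x := by
  by_contra! hx
  have := epsFn_antitone p hx
  unfold unif at h
  rw [l1dist_const, ← epsFn_inv_eq_gammaFn_inv hp] at h
  linarith

theorem lt_inv_of_two_mul_gammaFn_lt (hp : ∑ i, p i = 1) {y : ℝ}
    (h : 2 * gammaFn p y < l1dist p (unif k)) : y < (k : ℝ)⁻¹ := by
  by_contra! hy
  have := gammaFn_monotone p hy
  unfold unif at h
  rw [l1dist_const, epsFn_inv_eq_gammaFn_inv hp] at h
  linarith

theorem exists_lt_of_inv_lt (hp : ∑ i, p i = 1) {x : ℝ} (hx : (k : ℝ)⁻¹ < x) :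
    ∃ i, p i < x := by
  by_contra! h
  have hk : (k : ℝ) ≠ 0 := Nat.cast_ne_zero.2 (by rintro rfl; simp at hp)
  have := sum_le_sum fun i (_ : i ∈ univ) => h i
  rw [hp, sum_const, card_univ, Fintype.card_fin, nsmul_eq_mul] at this
  have := (inv_lt_iff_one_lt_mul₀' (by positivity)).1 hx
  linarith

theorem exists_le_of_gammaFn_pos {y : ℝ} (h : 0 < gammaFn p y) : ∃ i, p i ≤ y := by
  obtain ⟨i, hi, -⟩ := exists_ne_zero_of_sum_ne_zero h.ne'
  exact ⟨i, (mem_filter.1 hi).2⟩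

theorem epsFn_eq_psum_sub_mul {x : ℝ} {lI : ℕ} (hI : ∀ i : Fin k, x ≤ p i ↔ (i : ℕ) < lI)
    (hlI : lI ≤ k) : epsFn p x = psum p lI - lI * x := by
  rw [← psum_const hlI, ← psum_sub, epsFn, filter_congr fun i _ => hI i]
  rfl

theorem sum_cut_fill {x y : ℝ} (hyx : y < x) :
    ∑ i, (if x ≤ p i then x else if p i ≤ y then y else p i) =
      ∑ i, p i - epsFn p x + gammaFn p y := by
  simp only [epsFn, gammaFn, sum_filter]
  rw [← sum_sub_distrib, ← sum_add_distrib]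
  exact sum_congr rfl fun i _ => by split_ifs <;> linarith

end Levels

theorem lorenz_curve_flattest_general {k : ℕ} (δ : ℝ) (hδ : 0 < δ)
    (p : Fin k → ℝ) (hp : IsProbDist p)
    (hpd : δ < l1dist p (unif k))
    (x y : ℝ)
    (hex : epsFn p x = δ / 2) (hgy : gammaFn p y = δ / 2)
    (lI lJ : ℕ)
    (hI : ∀ i : Fin k, x ≤ p i ↔ (i : ℕ) < lI)
    (hJ : ∀ i : Fin k, p i ≤ y ↔ lJ ≤ (i : ℕ) + 1)
    (pflat : Fin k → ℝ)
    (hpflat : ∀ i : Fin k,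
      pflat i = if x ≤ p i then x else if p i ≤ y then y else p i) :
    (∀ l : ℕ, 1 ≤ l → l ≤ lI → psum pflat l = (l : ℝ) * x) ∧
    (∀ l : ℕ, lI < l → l < lJ → psum pflat l = psum p l - δ / 2) ∧
    (∀ l : ℕ, lJ ≤ l → l ≤ k → psum pflat l = 1 - ((k : ℝ) - (l : ℝ)) * y) := by
  have hx : (k : ℝ)⁻¹ < x := inv_lt_of_two_mul_epsFn_lt hp.2 (by linarith)
  have hyx : y < x := (lt_inv_of_two_mul_gammaFn_lt hp.2 (by linarith)).trans hx
  have hlI : lI ≤ k := by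
    obtain ⟨i, hi⟩ := exists_lt_of_inv_lt hp.2 hx
    exact (not_lt.1 fun h => hi.not_ge ((hI i).2 h)).trans i.isLt.le
  have hlJ : lJ ≤ k := by
    obtain ⟨i, hi⟩ := exists_le_of_gammaFn_pos (p := p) (by linarith)
    exact ((hJ i).1 hi).trans i.isLt
  have head (l : ℕ) (hl : l ≤ lI) : psum pflat l = l * x :=
    psum_eq_mul_of_forall_lt (hl.trans hlI) fun i hi => by
      rw [hpflat, if_pos ((hI i).2 (hi.trans_le hl))]
  refine ⟨fun l _ hl => head l hl, fun l hIl hlJ' => ?_, fun l hJl hl => ?_⟩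
  · have hmid := psum_eq_psum_of_forall_Ico (g := pflat - p) hIl.le fun i h1 h2 => by
      rw [Pi.sub_apply, hpflat, if_neg (mt (hI i).1 (by omega)),
        if_neg (mt (hJ i).1 (by omega)), sub_self]
    rw [psum_sub, psum_sub, head lI le_rfl] at hmid
    linarith [epsFn_eq_psum_sub_mul hI hlI]
  · have htail (i : Fin k) (hi : l ≤ (i : ℕ)) : pflat i = y := by
      have hpy : p i ≤ y := (hJ i).2 (by omega)
      rw [hpflat, if_neg (by linarith), if_pos hpy]
    rw [psum_eq_sum_sub_mul_of_forall_ge hl htail, funext hpflat, sum_cut_fill hyx, hex, hgy,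
      hp.2]
    ring

/-- the Lorenz curve of the flattest `δ`-approximation: it equals `l·x*` on
`I = {1,…,l_I}`, equals `Σ_{i=1}^l pᵢ − δ/2` strictly between `I` and `J`, and equals
`1 − (k − l)·y*` on `J = {l_J,…,k}`. -/
theorem lorenz_curve_flattest {k : ℕ} (δ : ℝ) (hδ : 0 < δ)
    (p : Fin k → ℝ) (hp : IsProbDist p) (hord : Antitone p)
    (hpd : δ < l1dist p (unif k))
    (x y : ℝ) (hx : x ∈ Set.Icc (0 : ℝ) 1) (hy : y ∈ Set.Icc (0 : ℝ) 1)
    (hex : epsFn p x = δ / 2) (hgy : gammaFn p y = δ / 2)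
    (lI lJ : ℕ)
    (hI : ∀ i : Fin k, x ≤ p i ↔ (i : ℕ) < lI)
    (hJ : ∀ i : Fin k, p i ≤ y ↔ lJ ≤ (i : ℕ) + 1)
    (pflat : Fin k → ℝ)
    (hpflat : ∀ i : Fin k,
      pflat i = if x ≤ p i then x else if p i ≤ y then y else p i) :
    (∀ l : ℕ, 1 ≤ l → l ≤ lI → psum pflat l = (l : ℝ) * x) ∧
    (∀ l : ℕ, lI < l → l < lJ → psum pflat l = psum p l - δ / 2) ∧
    (∀ l : ℕ, lJ ≤ l → l ≤ k → psum pflat l = 1 - ((k : ℝ) - (l : ℝ)) * y) :=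
  lorenz_curve_flattest_general δ hδ p hp hpd x y hex hgy lI lJ hI hJ pflat hpflat
end
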